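/- arXiv:1507.04680 — 3 statements merged into one kernel-verified Lean document; each statement's English description precedes it below -/
import Mathlib

section
/- (Proposition 1, necessity of tight secondary rate constraint) Suppose (P_d*, δ_r*, P_sp*, P_ss*) is feasible and maximizes the primary sum-rate ∑_i ln(1 + h_p_i·P_d_i + h_sp_i·P_sp_i). If there exists a slot j with h_sp_j > 0 and P_ss_j* > 0, and the secondary rate constraint is slack, i.e. (1/N)∑_i ln(1 + h_ss_i·P_ss_i*) > R̄_s, then there exists a feasible point achieving a strictly larger primary sum-rate—contradiction. Hence at any optimum with some slot having h_sp_j > 0 and P_ss_j* > 0, the secondary rate constraint holds with equality: (1/N)∑_i ln(1 + h_ss_i·P_ss_i*) = R̄_s. -/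
/-- Feasibility of a power policy `(Pd, δr, Psp, Pss)` for the cooperation problem. -/
def Feasible (N : ℕ) (α Bmax Rs : ℝ) (Ep Es hss : Fin N → ℝ)
    (Pd δr Psp Pss : Fin N → ℝ) : Prop :=
  (∀ i, 0 ≤ Pd i) ∧ (∀ i, 0 ≤ δr i) ∧ (∀ i, 0 ≤ Psp i) ∧ (∀ i, 0 ≤ Pss i) ∧
  (∀ k, ∑ i ∈ Finset.Iic k, (Pd i + δr i) ≤ ∑ i ∈ Finset.Iic k, Ep i) ∧
  (∀ k, ∑ i ∈ Finset.Iic k, (Psp i + Pss i) ≤ ∑ i ∈ Finset.Iic k, (Es i + α * δr i)) ∧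
  (∀ k, ∑ i ∈ Finset.Iic k, (Es i + α * δr i) - ∑ i ∈ Finset.Iio k, (Psp i + Pss i) ≤ Bmax) ∧
  ((1 / (N : ℝ)) * ∑ i, Real.log (1 + hss i * Pss i) ≥ Rs)

/-- Proposition 1: at an optimum with some slot `j` having `h_sp j > 0` and `Pss* j > 0`,
the secondary rate constraint is tight. -/
theorem secondary_rate_constraint_tight (N : ℕ) (α Bmax Rs : ℝ)
    (Ep Es hpg hsp hss : Fin N → ℝ)
    (hhp : ∀ i, 0 ≤ hpg i) (hhsp : ∀ i, 0 ≤ hsp i) (hhss : ∀ i, 0 ≤ hss i)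
    (Pd δr Psp Pss : Fin N → ℝ)
    (hfeas : Feasible N α Bmax Rs Ep Es hss Pd δr Psp Pss)
    (hopt : ∀ Pd' δr' Psp' Pss' : Fin N → ℝ,
      Feasible N α Bmax Rs Ep Es hss Pd' δr' Psp' Pss' →
      ∑ i, Real.log (1 + hpg i * Pd' i + hsp i * Psp' i) ≤
        ∑ i, Real.log (1 + hpg i * Pd i + hsp i * Psp i))
    (j : Fin N) (hj : 0 < hsp j) (hPss : 0 < Pss j) :
    (1 / (N : ℝ)) * ∑ i, Real.log (1 + hss i * Pss i) = Rs := by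
  obtain ⟨hPd0, hδr0, hPsp0, hPss0, hEc, hSc, hB, hR⟩ := hfeas
  by_contra hne
  have hNpos : (0:ℝ) < N := by exact_mod_cast j.pos
  set A := ∑ i, Real.log (1 + hss i * Pss i) with hA
  have h1 : Rs < (1/(N:ℝ)) * A := lt_of_le_of_ne hR (fun h => hne h.symm)
  have hslack : (N:ℝ) * Rs < A := by
    have := (mul_lt_mul_iff_right₀ hNpos).mpr h1
    rw [← mul_assoc, mul_one_div, div_self (ne_of_gt hNpos), one_mul] at this
    exact this
  set c := hss j with hc
  have hcpos : 0 < 1 + c * Pss j := by nlinarith [hhss j]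
  set L0 := Real.log (1 + c * Pss j) with hL0
  -- continuity argument to find a small ε
  have hcont : Filter.Tendsto (fun ε : ℝ => A - L0 + Real.log (1 + c * (Pss j - ε)))
      (nhds 0) (nhds (A - L0 + Real.log (1 + c * (Pss j - 0)))) := by
    apply Filter.Tendsto.const_add
    apply (Real.continuousAt_log (by simpa using ne_of_gt hcpos)).tendsto.comp
    exact (Continuous.tendsto (by continuity) 0)
  have hval : A - L0 + Real.log (1 + c * (Pss j - 0)) = A := by
    simp [hL0]
  rw [hval] at hcont
  have hev1 : ∀ᶠ ε in nhdsWithin (0:ℝ) (Set.Ioi 0),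
      (N:ℝ) * Rs < A - L0 + Real.log (1 + c * (Pss j - ε)) :=
    (hcont.eventually (eventually_gt_nhds hslack)).filter_mono nhdsWithin_le_nhds
  have hev2 : ∀ᶠ ε in nhdsWithin (0:ℝ) (Set.Ioi 0), ε ∈ Set.Ioo (0:ℝ) (Pss j) :=
    Filter.eventually_of_mem (Ioo_mem_nhdsGT_of_mem ⟨le_refl 0, hPss⟩) (fun _ hx => hx)
  obtain ⟨ε, hrate, hεpos, hεlt⟩ := (hev1.and hev2).exists
  -- the modified policy
  set Psp' := Function.update Psp j (Psp j + ε) with hPsp'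
  set Pss' := Function.update Pss j (Pss j - ε) with hPss'
  have hsum : ∀ i, Psp' i + Pss' i = Psp i + Pss i := by
    intro i
    by_cases h : i = j
    · subst h; simp [hPsp', hPss']
    · simp [hPsp', hPss', Function.update_of_ne h]
  have hrate_eq : ∑ i, Real.log (1 + hss i * Pss' i)
      = A - L0 + Real.log (1 + c * (Pss j - ε)) := by
    have hfun : (fun i => Real.log (1 + hss i * Pss' i))
        = Function.update (fun i => Real.log (1 + hss i * Pss i)) j
            (Real.log (1 + c * (Pss j - ε))) := by
      funext i
      by_cases h : i = j
      · subst h; simp [hPss', hc]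
      · simp [hPss', Function.update_of_ne h]
    rw [hfun, Finset.sum_update_of_mem (Finset.mem_univ j)]
    rw [hA, Finset.sum_eq_sum_sdiff_singleton_add (Finset.mem_univ j)
      (fun i => Real.log (1 + hss i * Pss i))]
    rw [hL0]
    ring
  have hfeas' : Feasible N α Bmax Rs Ep Es hss Pd δr Psp' Pss' := by
    refine ⟨hPd0, hδr0, ?_, ?_, hEc, ?_, ?_, ?_⟩
    · intro i
      by_cases h : i = j
      · subst h; simp [hPsp']; linarith [hPsp0 i, hεpos]
      · simpa [hPsp', Function.update_of_ne h] using hPsp0 i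
    · intro i
      by_cases h : i = j
      · subst h; simp [hPss']; linarith [hεlt]
      · simpa [hPss', Function.update_of_ne h] using hPss0 i
    · intro k
      calc ∑ i ∈ Finset.Iic k, (Psp' i + Pss' i)
          = ∑ i ∈ Finset.Iic k, (Psp i + Pss i) :=
            Finset.sum_congr rfl (fun i _ => hsum i)
        _ ≤ _ := hSc k
    · intro k
      have : ∑ i ∈ Finset.Iio k, (Psp' i + Pss' i)
          = ∑ i ∈ Finset.Iio k, (Psp i + Pss i) :=
        Finset.sum_congr rfl (fun i _ => hsum i)
      rw [this]; exact hB k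
    · rw [hrate_eq]
      have : (1/(N:ℝ)) * ((N:ℝ) * Rs) ≤ (1/(N:ℝ)) * (A - L0 + Real.log (1 + c * (Pss j - ε))) :=
        mul_le_mul_of_nonneg_left (le_of_lt hrate) (by positivity)
      rw [← mul_assoc, one_div_mul_cancel (ne_of_gt hNpos), one_mul] at this
      exact this
  have hobj : ∑ i, Real.log (1 + hpg i * Pd i + hsp i * Psp i)
      < ∑ i, Real.log (1 + hpg i * Pd i + hsp i * Psp' i) := by
    apply Finset.sum_lt_sum
    · intro i _
      by_cases h : i = j
      · subst h
        apply Real.log_le_log (by nlinarith [hhp i, hhsp i, hPd0 i, hPsp0 i])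
        simp [hPsp']
        nlinarith [hhsp i]
      · simp [hPsp', Function.update_of_ne h]
    · refine ⟨j, Finset.mem_univ j, ?_⟩
      apply Real.log_lt_log (by nlinarith [hhp j, hPd0 j, hPsp0 j])
      simp [hPsp']
      nlinarith
  exact absurd (hopt Pd δr Psp' Pss' hfeas') (not_le.mpr hobj)
end

section
/- (Proposition 4) Let h_p, h_sp > 0 with h_p > h_sp, α ∈ (0,1], and suppose real numbers P_d, P_sp, δ_r ≥ 0 together with KKT multipliers τ₁, τ₂, τ₃ ≥ 0 and γ' ≥ 0 satisfy the stationarity relation (α·h_sp − h_p)/(1 + h_p·P_d + h_sp·P_sp) = τ₁ + α·γ' − τ₂ − α·τ₃ and the complementary slackness conditions τ₂·δ_r = 0 and τ₃·P_sp = 0. Then δ_r and P_sp cannot both be strictly positive: δ_r = 0 or P_sp = 0. -/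
/-- Proposition 4: when `h_p > h_sp`, the energy transfer `δ_r` and the relay power
`P_sp` cannot both be strictly positive. -/
theorem no_simultaneous_transfer_and_relay
    (hp hsp α Pd Psp δr τ1 τ2 τ3 γ' : ℝ)
    (hhsp : 0 < hsp) (hlt : hsp < hp) (hα0 : 0 < α) (hα1 : α ≤ 1)
    (hPd : 0 ≤ Pd) (hPsp : 0 ≤ Psp) (hδr : 0 ≤ δr)
    (hτ1 : 0 ≤ τ1) (hτ2 : 0 ≤ τ2) (hτ3 : 0 ≤ τ3) (hγ' : 0 ≤ γ')
    (hstat : (α * hsp - hp) / (1 + hp * Pd + hsp * Psp) = τ1 + α * γ' - τ2 - α * τ3)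
    (hcs2 : τ2 * δr = 0) (hcs3 : τ3 * Psp = 0) :
    δr = 0 ∨ Psp = 0 := by
  by_contra h
  push_neg at h
  obtain ⟨h1, h2⟩ := h
  have hδ : 0 < δr := lt_of_le_of_ne hδr (Ne.symm h1)
  have hP : 0 < Psp := lt_of_le_of_ne hPsp (Ne.symm h2)
  have hτ2z : τ2 = 0 := by
    rcases mul_eq_zero.mp hcs2 with h | h
    · exact h
    · exact absurd h h1
  have hτ3z : τ3 = 0 := by
    rcases mul_eq_zero.mp hcs3 with h | h
    · exact h
    · exact absurd h h2
  have hden : 0 < 1 + hp * Pd + hsp * Psp := by nlinarith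
  have hnum : α * hsp - hp < 0 := by nlinarith
  have hneg : (α * hsp - hp) / (1 + hp * Pd + hsp * Psp) < 0 :=
    div_neg_of_neg_of_pos hnum hden
  rw [hstat, hτ2z, hτ3z] at hneg
  nlinarith
end

section
/- (Proposition 5, battery-not-full case) Let h_p, h_sp > 0 with h_p < α·h_sp and α ∈ (0,1]. Suppose P_d, P_sp ≥ 0, multipliers τ₁, τ₂, τ₃ ≥ 0 and γ' ≥ 0 satisfy (α·h_sp − h_p)/(1 + h_p·P_d + h_sp·P_sp) = τ₁ + α·γ' − τ₂ − α·τ₃ together with τ₁·P_d = 0. If γ' = 0 (which holds when the battery is not full, E < B_max, by complementary slackness), then P_d = 0. -/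
/-- Proposition 5 (battery-not-full case): when `h_p < α·h_sp` and the battery is not
full (`γ' = 0`), the primary direct power is zero. -/
theorem no_direct_transmission_when_relay_better
    (hp hsp α Pd Psp τ1 τ2 τ3 γ' : ℝ)
    (hhp : 0 < hp) (hhsp : 0 < hsp) (hlt : hp < α * hsp) (hα0 : 0 < α) (hα1 : α ≤ 1)
    (hPd : 0 ≤ Pd) (hPsp : 0 ≤ Psp)
    (hτ1 : 0 ≤ τ1) (hτ2 : 0 ≤ τ2) (hτ3 : 0 ≤ τ3) (hγ' : 0 ≤ γ')
    (hstat : (α * hsp - hp) / (1 + hp * Pd + hsp * Psp) = τ1 + α * γ' - τ2 - α * τ3)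
    (hcs1 : τ1 * Pd = 0) (hγ0 : γ' = 0) :
    Pd = 0 := by
  have hden : 0 < 1 + hp * Pd + hsp * Psp := by positivity
  have hpos : 0 < (α * hsp - hp) / (1 + hp * Pd + hsp * Psp) :=
    div_pos (by linarith) hden
  have hτ1pos : 0 < τ1 := by
    subst hγ0; nlinarith
  rcases mul_eq_zero.mp hcs1 with h | h
  · linarith
  · exact h
end
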